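/- Let k ≥ 1 be an integer and let w be a real number. Then there exist distinct integers r_0, …, r_k and an integer M ≥ 1 such that the set S = {ξ ∈ ℝ : ω_k(ξ) ≥ w} satisfies S ⊆ ⋃_{i=0}^{k} τ_i^{−1}(S^lead), where S^lead = {ξ ∈ ℝ : ω_k^lead(ξ) ≥ w} and τ_i(ξ) = 1/(M(ξ − r_i)) for each ξ ∈ ℝ \ {r_i}. Moreover S^lead ⊆ S. -/

import Mathlib

open Polynomial Filter

/-- The height (maximum absolute value of coefficients) of an integer polynomial,
as a real number. -/
noncomputable def intPolyNorm (P : Polynomial ℤ) : ℝ :=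
  ((P.support.sup fun i => (P.coeff i).natAbs : ℕ) : ℝ)

/-- The height (maximum absolute value of coefficients) of a real polynomial. -/
noncomputable def realPolyNorm (P : Polynomial ℝ) : ℝ :=
  (Finset.range (P.natDegree + 1)).sup' Finset.nonempty_range_add_one fun i => |P.coeff i|

/-- The maximum norm of an integer vector, as a real number. -/
noncomputable def vecNorm {n : ℕ} (x : Fin (n + 1) → ℤ) : ℝ :=
  ((Finset.univ.sup fun i => (x i).natAbs : ℕ) : ℝ)

/-- The exponent `ω_n(ξ)`: the supremum (in `EReal`) of all `ω ∈ ℝ` for which there are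
infinitely many nonzero `P ∈ ℤ[x]` with `deg P ≤ n` and `|P(ξ)| ≤ ‖P‖ ^ (-ω)`. -/
noncomputable def omegaExp (n : ℕ) (ξ : ℝ) : EReal :=
  sSup (Real.toEReal '' {ω : ℝ |
    {P : Polynomial ℤ | P ≠ 0 ∧ P.natDegree ≤ n ∧
      |Polynomial.aeval ξ P| ≤ intPolyNorm P ^ (-ω)}.Infinite})

/-- The exponent `ω_n^lead(ξ)`: as `ω_n(ξ)`, but restricted to polynomials whose
coefficient of `x^n` has absolute value equal to the height. -/
noncomputable def omegaLeadExp (n : ℕ) (ξ : ℝ) : EReal :=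
  sSup (Real.toEReal '' {ω : ℝ |
    {P : Polynomial ℤ | P ≠ 0 ∧ P.natDegree ≤ n ∧
      ((P.coeff n).natAbs : ℝ) = intPolyNorm P ∧
      |Polynomial.aeval ξ P| ≤ intPolyNorm P ^ (-ω)}.Infinite})

/-- The exponent `λ_n(ξ)`: the supremum (in `EReal`) of all `λ ∈ ℝ` for which there are
infinitely many nonzero `x = (x_0, …, x_n) ∈ ℤ^{n+1}` with
`max_{1 ≤ m ≤ n} |x_0 ξ^m − x_m| ≤ ‖x‖ ^ (−λ)`. -/
noncomputable def lambdaExp (n : ℕ) (ξ : ℝ) : EReal :=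
  sSup (Real.toEReal '' {l : ℝ |
    {x : Fin (n + 1) → ℤ | x ≠ 0 ∧ ∀ m : Fin (n + 1), 1 ≤ (m : ℕ) →
      |(x 0 : ℝ) * ξ ^ (m : ℕ) - (x m : ℝ)| ≤ vecNorm x ^ (-l)}.Infinite})

/-- The polynomial `Q(x) = (Mx)^k · P(1/(Mx) + r)`, i.e. `∑_{j=0}^{k} a_j M^{k−j} x^{k−j}`
where `P(x + r) = ∑_j a_j x^j`. -/
noncomputable def Qpoly (k : ℕ) (M : ℤ) (r : ℤ) (P : Polynomial ℤ) : Polynomial ℤ :=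
  ∑ j ∈ Finset.range (k + 1),
    Polynomial.C ((P.comp (Polynomial.X + Polynomial.C r)).coeff j * M ^ (k - j)) *
      Polynomial.X ^ (k - j)

/-!
Take the nodes `r_i = i` for `0 ≤ i ≤ k`. By Lagrange interpolation `‖P‖ ≪ max_i |P(i)|` for
`deg P ≤ k`. If `i` is a node where `|P(i)|` is largest, every coefficient `a_j` of `P(x + i)` is
`≪ ‖P‖ ≪ |a_0| = |P(i)|`, so for `M` large the polynomial
`Q(x) = (Mx)^k P(1/(Mx) + i) = ∑ a_j M^(k-j) x^(k-j)` has the dominant leading coefficient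
`P(i) M^k`, a height comparable to `‖P‖`, and `Q(τ_i ξ) = P(ξ) / (ξ - i)^k`. By pigeonhole one node
serves infinitely many good approximations `P` of `ξ`, and their transforms `Q` are good
approximations of `τ_i ξ` of the restricted kind, with any exponent below the original one. When
`ξ` is itself a node, `τ_i ξ` is rational for the other nodes, where `ω_k^lead` is infinite.
-/

lemma intPolyNorm_nonneg (P : ℤ[X]) : 0 ≤ intPolyNorm P := Nat.cast_nonneg _

lemma intPolyNorm_zero : intPolyNorm 0 = 0 := by simp [intPolyNorm]

lemma abs_coeff_le_intPolyNorm (P : ℤ[X]) (n : ℕ) : |(P.coeff n : ℝ)| ≤ intPolyNorm P := by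
  rw [← Int.cast_abs, ← Nat.cast_natAbs]
  rcases eq_or_ne (P.coeff n) 0 with h | h
  · simp [h, intPolyNorm]
  · exact Nat.cast_le.2 (Finset.le_sup (f := fun i => (P.coeff i).natAbs) (mem_support_iff.2 h))

lemma intPolyNorm_le {P : ℤ[X]} {b : ℝ} (hb : 0 ≤ b) (h : ∀ n, |(P.coeff n : ℝ)| ≤ b) :
    intPolyNorm P ≤ b := by
  refine (Nat.cast_le.2 (Finset.sup_le fun n _ => Nat.le_floor ?_)).trans (Nat.floor_le hb)
  simpa [Nat.cast_natAbs] using h n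

lemma intPolyNorm_eq_abs_coeff {P : ℤ[X]} {m : ℕ} (h : ∀ n, |P.coeff n| ≤ |P.coeff m|) :
    intPolyNorm P = |(P.coeff m : ℝ)| :=
  le_antisymm (intPolyNorm_le (abs_nonneg _) fun n => by exact_mod_cast h n)
    (abs_coeff_le_intPolyNorm P m)

lemma one_le_intPolyNorm {P : ℤ[X]} (hP : P ≠ 0) : 1 ≤ intPolyNorm P := by
  obtain ⟨n, hn⟩ := support_nonempty.2 hP
  calc (1 : ℝ) ≤ |(P.coeff n : ℝ)| := by
        exact_mod_cast Int.one_le_abs (mem_support_iff.1 hn)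
    _ ≤ intPolyNorm P := abs_coeff_le_intPolyNorm P n

lemma finite_setOf_natDegree_le_intPolyNorm_le (n : ℕ) (H : ℝ) :
    {P : ℤ[X] | P.natDegree ≤ n ∧ intPolyNorm P ≤ H}.Finite := by
  refine Set.Finite.of_finite_image (f := fun P : ℤ[X] => fun m : Fin (n + 1) => P.coeff m) ?_ ?_
  · refine (Set.Finite.pi fun _ => Set.finite_Icc (-⌈H⌉) ⌈H⌉).subset ?_
    rintro _ ⟨P, ⟨-, hH⟩, rfl⟩ m -
    have : |(P.coeff m : ℝ)| ≤ ⌈H⌉ :=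
      ((abs_coeff_le_intPolyNorm P m).trans hH).trans (Int.le_ceil H)
    exact abs_le.1 (by exact_mod_cast this)
  · rintro P ⟨hP, -⟩ Q ⟨hQ, -⟩ h
    ext m
    rcases le_or_gt m n with hm | hm
    · exact congrFun h ⟨m, Nat.lt_succ_of_le hm⟩
    · rw [coeff_eq_zero_of_natDegree_lt (hP.trans_lt hm),
        coeff_eq_zero_of_natDegree_lt (hQ.trans_lt hm)]

lemma coe_le_sSup_image_coe_iff {s : Set ℝ} (hs : ∀ x ∈ s, ∀ y ≤ x, y ∈ s) (w : ℝ) :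
    (w : EReal) ≤ sSup (Real.toEReal '' s) ↔ ∀ x < w, x ∈ s := by
  constructor
  · intro hw x hx
    obtain ⟨_, ⟨y, hy, rfl⟩, hxy⟩ := lt_sSup_iff.1 ((EReal.coe_lt_coe_iff.2 hx).trans_le hw)
    exact hs y hy x (EReal.coe_lt_coe_iff.1 hxy).le
  · intro h
    by_contra! hlt
    obtain ⟨x, hx, hxw⟩ := EReal.lt_iff_exists_real_btwn.1 hlt
    exact hx.not_ge (le_sSup ⟨x, h x (EReal.coe_lt_coe_iff.1 hxw), rfl⟩)

def approxPolys (n : ℕ) (ξ ω : ℝ) : Set ℤ[X] :=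
  {P | P ≠ 0 ∧ P.natDegree ≤ n ∧ |aeval ξ P| ≤ intPolyNorm P ^ (-ω)}

def leadApproxPolys (n : ℕ) (ξ ω : ℝ) : Set ℤ[X] :=
  {P | P ≠ 0 ∧ P.natDegree ≤ n ∧ ((P.coeff n).natAbs : ℝ) = intPolyNorm P ∧
    |aeval ξ P| ≤ intPolyNorm P ^ (-ω)}

lemma rpow_neg_le_rpow_neg {P : ℤ[X]} (hP : P ≠ 0) {ω ω' : ℝ} (h : ω ≤ ω') :
    intPolyNorm P ^ (-ω') ≤ intPolyNorm P ^ (-ω) :=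
  Real.rpow_le_rpow_of_exponent_le (one_le_intPolyNorm hP) (neg_le_neg h)

lemma approxPolys_antitone (n : ℕ) (ξ : ℝ) : Antitone (approxPolys n ξ) :=
  fun _ _ h _ ⟨hP, hdeg, hval⟩ => ⟨hP, hdeg, hval.trans (rpow_neg_le_rpow_neg hP h)⟩

lemma leadApproxPolys_antitone (n : ℕ) (ξ : ℝ) : Antitone (leadApproxPolys n ξ) :=
  fun _ _ h _ ⟨hP, hdeg, hlead, hval⟩ =>
    ⟨hP, hdeg, hlead, hval.trans (rpow_neg_le_rpow_neg hP h)⟩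

lemma leadApproxPolys_subset (n : ℕ) (ξ ω : ℝ) : leadApproxPolys n ξ ω ⊆ approxPolys n ξ ω :=
  fun _ ⟨hP, hdeg, _, hval⟩ => ⟨hP, hdeg, hval⟩

lemma coe_le_omegaExp_iff (n : ℕ) (ξ w : ℝ) :
    (w : EReal) ≤ omegaExp n ξ ↔ ∀ ω < w, (approxPolys n ξ ω).Infinite :=
  coe_le_sSup_image_coe_iff (fun _ h _ hle => h.mono (approxPolys_antitone n ξ hle)) w

lemma coe_le_omegaLeadExp_iff (n : ℕ) (ξ w : ℝ) :
    (w : EReal) ≤ omegaLeadExp n ξ ↔ ∀ ω < w, (leadApproxPolys n ξ ω).Infinite :=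
  coe_le_sSup_image_coe_iff (fun _ h _ hle => h.mono (leadApproxPolys_antitone n ξ hle)) w

lemma coe_le_omegaLeadExp_of_aeval_eq_zero {n : ℕ} {ξ : ℝ} {P : ℤ[X]} (hP : P ≠ 0)
    (hdeg : P.natDegree ≤ n) (hlead : ∀ m, |P.coeff m| ≤ |P.coeff n|) (hroot : aeval ξ P = 0)
    (w : ℝ) : (w : EReal) ≤ omegaLeadExp n ξ := by
  rw [coe_le_omegaLeadExp_iff]
  intro ω _
  refine Set.infinite_of_injective_forall_mem (f := fun N : ℕ => C ((N : ℤ) + 1) * P)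
    (fun N N' h => ?_) fun N => ⟨?_, ?_, ?_, ?_⟩
  · have := C_injective (mul_right_cancel₀ hP h)
    omega
  · exact mul_ne_zero (C_ne_zero.2 (by omega)) hP
  · exact (natDegree_C_mul_le _ _).trans hdeg
  · rw [intPolyNorm_eq_abs_coeff fun m => ?_, Nat.cast_natAbs, Int.cast_abs]
    simp only [coeff_C_mul, abs_mul]
    exact mul_le_mul_of_nonneg_left (hlead m) (abs_nonneg _)
  · rw [map_mul, hroot, mul_zero, abs_zero]
    exact Real.rpow_nonneg (intPolyNorm_nonneg _) _

lemma coe_le_omegaLeadExp_one_div_intCast {n : ℕ} (hn : 1 ≤ n) {d : ℤ} (hd : d ≠ 0) (w : ℝ) :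
    (w : EReal) ≤ omegaLeadExp n (1 / d) := by
  -- `d x^n - x^(n-1) = x^(n-1) (d x - 1)` vanishes at `1/d`, and `|d| ≥ 1` is its largest
  -- coefficient.
  have hcoeff : ∀ m, (C d * X ^ n - X ^ (n - 1)).coeff m =
      (if m = n then d else 0) - if m = n - 1 then 1 else 0 := by
    intro m
    simp only [coeff_sub, coeff_C_mul_X_pow, coeff_X_pow]
  have hlead : (C d * X ^ n - X ^ (n - 1)).coeff n = d := by
    rw [hcoeff, if_pos rfl, if_neg (by omega), sub_zero]
  refine coe_le_omegaLeadExp_of_aeval_eq_zero (fun h => hd (by rw [← hlead, h, coeff_zero]))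
    ((natDegree_sub_le _ _).trans (max_le (natDegree_C_mul_X_pow_le d n)
      ((natDegree_X_pow_le (n - 1)).trans (Nat.sub_le n 1)))) (fun m => ?_) ?_ w
  · rw [hlead, hcoeff]
    have := Int.one_le_abs hd
    split_ifs <;> simp_all
  · obtain ⟨m, rfl⟩ : ∃ m, n = m + 1 := ⟨n - 1, by omega⟩
    have : (d : ℝ) ≠ 0 := Int.cast_ne_zero.2 hd
    simp only [map_sub, map_mul, aeval_C, map_pow, aeval_X, algebraMap_int_eq, Int.coe_castRingHom,
      Nat.add_sub_cancel, pow_succ]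
    field_simp
    ring

lemma coeff_Qpoly_of_le (k : ℕ) (M r : ℤ) (P : ℤ[X]) {m : ℕ} (hm : m ≤ k) :
    (Qpoly k M r P).coeff m = (P.comp (X + C r)).coeff (k - m) * M ^ m := by
  rw [Qpoly, finsetSum_coeff, Finset.sum_eq_single (k - m)]
  · rw [coeff_C_mul_X_pow, if_pos (by omega), Nat.sub_sub_self hm]
  · intro j hj hne
    rw [coeff_C_mul_X_pow, if_neg]
    have := Finset.mem_range.1 hj
    omega
  · intro h
    exact absurd (Finset.mem_range.2 (by omega)) h

lemma coeff_Qpoly_of_lt (k : ℕ) (M r : ℤ) (P : ℤ[X]) {m : ℕ} (hm : k < m) :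
    (Qpoly k M r P).coeff m = 0 := by
  rw [Qpoly, finsetSum_coeff]
  refine Finset.sum_eq_zero fun j _ => ?_
  rw [coeff_C_mul_X_pow, if_neg (by omega)]

lemma coeff_Qpoly_self (k : ℕ) (M r : ℤ) (P : ℤ[X]) :
    (Qpoly k M r P).coeff k = P.eval r * M ^ k := by
  rw [coeff_Qpoly_of_le k M r P le_rfl, Nat.sub_self, coeff_zero_eq_eval_zero, eval_comp]
  simp

lemma natDegree_Qpoly_le (k : ℕ) (M r : ℤ) (P : ℤ[X]) : (Qpoly k M r P).natDegree ≤ k :=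
  natDegree_le_iff_coeff_eq_zero.2 fun _ hm => coeff_Qpoly_of_lt k M r P hm

lemma aeval_Qpoly_one_div {k : ℕ} {M r : ℤ} {P : ℤ[X]} (hP : P.natDegree ≤ k) {ξ : ℝ}
    (hM : (M : ℝ) ≠ 0) (hξ : ξ - r ≠ 0) :
    aeval (1 / (M * (ξ - r))) (Qpoly k M r P) = aeval ξ P / (ξ - r) ^ k := by
  have hshift : aeval ξ P = aeval (ξ - r) (P.comp (X + C r)) := by simp [aeval_comp]
  have hdeg : (P.comp (X + C r)).natDegree < k + 1 := by
    rw [natDegree_comp, natDegree_X_add_C, mul_one]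
    omega
  rw [hshift, aeval_eq_sum_range' hdeg, Finset.sum_div, Qpoly, map_sum]
  refine Finset.sum_congr rfl fun j hj => ?_
  obtain ⟨i, rfl⟩ : ∃ i, k = j + i := ⟨k - j, by have := Finset.mem_range.1 hj; omega⟩
  simp only [Nat.add_sub_cancel_left, map_mul, aeval_C, map_pow, aeval_X, algebraMap_int_eq,
    Int.coe_castRingHom]
  generalize ξ - (r : ℝ) = t at hξ ⊢
  rw [one_div, mul_inv, mul_pow, inv_pow, inv_pow]
  field_simp
  ring

lemma Qpoly_injOn (k : ℕ) {M : ℤ} (hM : M ≠ 0) (r : ℤ) :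
    Set.InjOn (Qpoly k M r) {P : ℤ[X] | P.natDegree ≤ k} := by
  intro P hP P' hP' h
  have hshift : P.comp (X + C r) = P'.comp (X + C r) := by
    ext n
    rcases le_or_gt n k with hn | hn
    · have := congrArg (fun Q => Q.coeff (k - n)) h
      simp only [coeff_Qpoly_of_le k M r _ (Nat.sub_le k n), Nat.sub_sub_self hn] at this
      exact mul_right_cancel₀ (pow_ne_zero _ hM) this
    · have hdeg : ∀ Q : ℤ[X], Q.natDegree ≤ k → (Q.comp (X + C r)).coeff n = 0 := fun Q hQ => by
        rw [coeff_eq_zero_of_natDegree_lt]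
        rw [natDegree_comp, natDegree_X_add_C, mul_one]
        omega
      rw [hdeg P hP, hdeg P' hP']
  have hinv : (X + C r).comp (X - C r) = X := by simp
  have := congrArg (fun Q => Q.comp (X - C r)) hshift
  simpa only [comp_assoc, hinv, comp_X] using this

lemma abs_coeff_Qpoly_le_self {k : ℕ} {M r : ℤ} {P : ℤ[X]} (hM : 1 ≤ M)
    (hdom : ∀ j, |(P.comp (X + C r)).coeff j| ≤ M * |P.eval r|) (m : ℕ) :
    |(Qpoly k M r P).coeff m| ≤ |(Qpoly k M r P).coeff k| := by
  rw [coeff_Qpoly_self, abs_mul, abs_pow, abs_of_pos (by omega : 0 < M)]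
  rcases lt_or_ge m k with hm | hm
  · rw [coeff_Qpoly_of_le k M r P hm.le, abs_mul, abs_pow, abs_of_pos (by omega : 0 < M)]
    calc |(P.comp (X + C r)).coeff (k - m)| * M ^ m ≤ M * |P.eval r| * M ^ m := by
          gcongr
          exact hdom _
      _ = |P.eval r| * M ^ (m + 1) := by ring
      _ ≤ |P.eval r| * M ^ k := by gcongr; omega
  · rcases hm.eq_or_lt with rfl | hm
    · rw [coeff_Qpoly_self, abs_mul, abs_pow, abs_of_pos (by omega : 0 < M)]
    · rw [coeff_Qpoly_of_lt k M r P hm, abs_zero]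
      positivity

lemma abs_coeff_X_add_C_pow_le (r : ℤ) (m j : ℕ) :
    |((X + C r) ^ m).coeff j| ≤ (|r| + 1) ^ m := by
  rw [coeff_X_add_C_pow, abs_mul, abs_pow, Nat.abs_cast]
  rcases le_or_gt j m with hj | hj
  · rw [add_pow, ← Nat.choose_symm hj]
    refine le_of_eq_of_le ?_ (Finset.single_le_sum (f := fun i => |r| ^ i * 1 ^ (m - i) *
      (m.choose i : ℤ)) (fun i _ => by positivity) (Finset.mem_range.2 (by omega : m - j < m + 1)))
    simp
  · simp only [Nat.choose_eq_zero_of_lt hj, Nat.cast_zero, mul_zero]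
    positivity

lemma abs_coeff_comp_X_add_C_le {k : ℕ} {P : ℤ[X]} (hP : P.natDegree ≤ k) (r : ℤ) (j : ℕ) :
    |((P.comp (X + C r)).coeff j : ℝ)| ≤ (k + 1) * (|(r : ℝ)| + 1) ^ k * intPolyNorm P := by
  have hsum : P.comp (X + C r) = ∑ m ∈ Finset.range (k + 1), C (P.coeff m) * (X + C r) ^ m := by
    conv_lhs => rw [P.as_sum_range' (k + 1) (by omega), sum_comp]
    exact Finset.sum_congr rfl fun m _ => monomial_comp m
  have hterm : ∀ m ∈ Finset.range (k + 1), |(P.coeff m : ℝ) * (((X + C r) ^ m).coeff j : ℝ)| ≤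
      intPolyNorm P * (|(r : ℝ)| + 1) ^ k := by
    intro m hm
    rw [abs_mul]
    refine mul_le_mul (abs_coeff_le_intPolyNorm P m) ?_ (abs_nonneg _) (Nat.cast_nonneg _)
    calc |(((X + C r) ^ m).coeff j : ℝ)| ≤ (|(r : ℝ)| + 1) ^ m := by
          exact_mod_cast abs_coeff_X_add_C_pow_le r m j
      _ ≤ (|(r : ℝ)| + 1) ^ k := pow_le_pow_right₀ (by simp) (Finset.mem_range_succ_iff.1 hm)
  rw [hsum, finsetSum_coeff]
  push_cast [coeff_C_mul]
  calc _ ≤ _ := Finset.abs_sum_le_sum_abs _ _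
    _ ≤ _ := Finset.sum_le_sum hterm
    _ = _ := by rw [Finset.sum_const, Finset.card_range, nsmul_eq_mul]; push_cast; ring

lemma abs_coeff_comp_X_add_natCast_le {k : ℕ} {P : ℤ[X]} (hP : P.natDegree ≤ k) {i : ℕ}
    (hi : i ≤ k) (j : ℕ) :
    |((P.comp (X + C (i : ℤ))).coeff j : ℝ)| ≤ (k + 1) ^ (k + 1) * intPolyNorm P := by
  refine (abs_coeff_comp_X_add_C_le hP i j).trans ?_
  rw [pow_succ']
  gcongr
  · exact intPolyNorm_nonneg P
  · simpa using hi

lemma exists_intPolyNorm_le_mul_of_abs_eval_le (k : ℕ) :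
    ∃ C > 0, ∀ P : ℤ[X], P.natDegree ≤ k → ∀ V : ℝ,
      (∀ i ≤ k, |((P.eval (i : ℤ) : ℤ) : ℝ)| ≤ V) → intPolyNorm P ≤ C * V := by
  set s := Finset.range (k + 1)
  set v : ℕ → ℝ := Nat.cast
  have hv : Set.InjOn v s := fun a _ b _ h => Nat.cast_injective h
  set C₀ := ∑ i ∈ s, ∑ j ∈ s, |(Lagrange.basis s v i).coeff j|
  refine ⟨C₀ + 1, by positivity, fun P hP V hV => ?_⟩
  have hV0 : 0 ≤ V := (abs_nonneg _).trans (hV 0 (Nat.zero_le k))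
  have hdeg : (P.map (Int.castRingHom ℝ)).degree < s.card := by
    refine degree_map_le.trans_lt ?_
    rw [Finset.card_range]
    exact (degree_le_natDegree.trans (WithBot.coe_le_coe.2 hP)).trans_lt
      (WithBot.coe_lt_coe.2 k.lt_succ_self)
  have hcoeff : ∀ n, (P.coeff n : ℝ) =
      ∑ i ∈ s, ((P.eval (i : ℤ) : ℤ) : ℝ) * (Lagrange.basis s v i).coeff n := by
    intro n
    rw [← eq_intCast (Int.castRingHom ℝ), ← coeff_map]
    conv_lhs => rw [Lagrange.eq_interpolate hv hdeg, Lagrange.interpolate_apply, finsetSum_coeff]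
    simp [v, eval_map]
  refine intPolyNorm_le (by positivity) fun n => ?_
  rcases le_or_gt n k with hn | hn
  · rw [hcoeff]
    calc _ ≤ ∑ i ∈ s, V * |(Lagrange.basis s v i).coeff n| := by
          refine (Finset.abs_sum_le_sum_abs _ _).trans (Finset.sum_le_sum fun i hi => ?_)
          rw [abs_mul]
          exact mul_le_mul_of_nonneg_right (hV i (Finset.mem_range_succ_iff.1 hi)) (abs_nonneg _)
      _ ≤ V * C₀ := by
          rw [← Finset.mul_sum]
          refine mul_le_mul_of_nonneg_left (Finset.sum_le_sum fun i _ => ?_) hV0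
          exact Finset.single_le_sum (f := fun j => |(Lagrange.basis s v i).coeff j|)
            (fun _ _ => abs_nonneg _) (Finset.mem_range_succ_iff.2 hn)
      _ ≤ (C₀ + 1) * V := by linarith
  · rw [coeff_eq_zero_of_natDegree_lt (hP.trans_lt hn), Int.cast_zero, abs_zero]
    positivity

lemma exists_mul_rpow_neg_le_rpow_neg {A C c ω ω' : ℝ} (hA : 0 < A) (hC : 0 < C) (hc : 0 < c)
    (hω : ω < ω') : ∃ H₀, ∀ x y : ℝ, 0 < x → y ≤ A * x → x ≤ C * y → H₀ < y →
      c * x ^ (-ω') ≤ y ^ (-ω) := by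
  set ε := ω' - ω
  have hε : 0 < ε := sub_pos.2 hω
  set G := max |Real.log A| |Real.log C|
  refine ⟨Real.exp ((Real.log c + (|ω| + ε) * G) / ε), fun x y hx hyx hxy hy => ?_⟩
  have hy0 : 0 < y := (Real.exp_pos _).trans hy
  have hlogy : Real.log c + (|ω| + ε) * G < ε * Real.log y := by
    rw [← div_lt_iff₀' hε]
    exact (Real.lt_log_iff_exp_lt hy0).2 hy
  have hlog_upper : Real.log x ≤ Real.log C + Real.log y := by
    rw [← Real.log_mul hC.ne' hy0.ne']
    exact Real.log_le_log hx hxy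
  have hlog_lower : Real.log y ≤ Real.log A + Real.log x := by
    rw [← Real.log_mul hA.ne' hx.ne']
    exact Real.log_le_log hy0 hyx
  have hdiff : |Real.log x - Real.log y| ≤ G := by
    rw [abs_sub_le_iff]
    constructor <;> linarith [le_abs_self (Real.log A), le_abs_self (Real.log C),
      le_max_left |Real.log A| |Real.log C|, le_max_right |Real.log A| |Real.log C|]
  have hω_term : -ω * Real.log x ≤ -ω * Real.log y + |ω| * G := by
    have := (neg_le_abs (ω * (Real.log x - Real.log y))).trans
      ((abs_mul _ _).trans_le (mul_le_mul_of_nonneg_left hdiff (abs_nonneg ω)))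
    linarith
  have hε_term : -ε * Real.log x ≤ -ε * Real.log y + ε * G := by
    nlinarith [le_abs_self (Real.log A), le_max_left |Real.log A| |Real.log C|]
  rw [Real.rpow_def_of_pos hx, Real.rpow_def_of_pos hy0, ← Real.exp_log hc, ← Real.exp_add]
  refine Real.exp_le_exp.2 ?_
  have : ω' = ω + ε := by ring
  rw [this]
  linarith

lemma exists_forall_lt_of_forall_lt_exists {ι α : Type*} [Finite ι] [Nonempty ι] [LinearOrder α]
    {p : ι → α → Prop} (hp : ∀ i, Antitone (p i)) {w : α} (h : ∀ x < w, ∃ i, p i x) :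
    ∃ i, ∀ x < w, p i x := by
  by_contra! hc
  choose x hxw hx using hc
  obtain ⟨i₀, hi₀⟩ := Finite.exists_max x
  obtain ⟨i, hi⟩ := h (x i₀) (hxw i₀)
  exact hx i (hp i (hi₀ i) hi)

section Transfer

variable {k : ℕ} {C₁ : ℝ}
  (hinterp : ∀ P : ℤ[X], P.natDegree ≤ k → ∀ V : ℝ,
    (∀ i ≤ k, |((P.eval (i : ℤ) : ℤ) : ℝ)| ≤ V) → intPolyNorm P ≤ C₁ * V)
  {M : ℤ} (hM1 : 1 ≤ M) (hM : (k + 1) ^ (k + 1) * C₁ ≤ M)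
include hinterp hM1 hM

lemma abs_coeff_Qpoly_le_of_isMax {P : ℤ[X]} (hP : P.natDegree ≤ k) {i : ℕ} (hi : i ≤ k)
    (hmax : ∀ j ≤ k, |P.eval (j : ℤ)| ≤ |P.eval (i : ℤ)|) (m : ℕ) :
    |(Qpoly k M i P).coeff m| ≤ |(Qpoly k M i P).coeff k| := by
  refine abs_coeff_Qpoly_le_self hM1 (fun j => ?_) m
  have hnorm : intPolyNorm P ≤ C₁ * |((P.eval (i : ℤ) : ℤ) : ℝ)| :=
    hinterp P hP _ fun j hj => by exact_mod_cast hmax j hj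
  have : |(((P.comp (X + C (i : ℤ))).coeff j : ℤ) : ℝ)| ≤ M * |((P.eval (i : ℤ) : ℤ) : ℝ)| :=
    calc _ ≤ (k + 1) ^ (k + 1) * intPolyNorm P := abs_coeff_comp_X_add_natCast_le hP hi j
      _ ≤ (k + 1) ^ (k + 1) * (C₁ * |((P.eval (i : ℤ) : ℤ) : ℝ)|) := by
          gcongr
      _ ≤ M * |((P.eval (i : ℤ) : ℤ) : ℝ)| := by
          rw [← mul_assoc]
          exact mul_le_mul_of_nonneg_right hM (abs_nonneg _)
  exact_mod_cast this

lemma intPolyNorm_Qpoly_bounds_of_isMax (hC₁ : 0 ≤ C₁) {P : ℤ[X]} (hP : P.natDegree ≤ k) {i : ℕ}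
    (hi : i ≤ k)
    (hmax : ∀ j ≤ k, |P.eval (j : ℤ)| ≤ |P.eval (i : ℤ)|) :
    intPolyNorm P ≤ C₁ * intPolyNorm (Qpoly k M i P) ∧
      intPolyNorm (Qpoly k M i P) ≤ (k + 1) ^ (k + 1) * (M : ℝ) ^ k * intPolyNorm P := by
  have hQnorm : intPolyNorm (Qpoly k M i P) = |((P.eval (i : ℤ) : ℤ) : ℝ)| * (M : ℝ) ^ k := by
    rw [intPolyNorm_eq_abs_coeff (abs_coeff_Qpoly_le_of_isMax hinterp hM1 hM hP hi hmax),
      coeff_Qpoly_self]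
    push_cast
    rw [abs_mul, abs_pow, abs_of_nonneg (by positivity : (0 : ℝ) ≤ M)]
  rw [hQnorm]
  constructor
  · refine (hinterp P hP |((P.eval (i : ℤ) : ℤ) : ℝ)| fun j hj => by exact_mod_cast hmax j hj).trans
      (mul_le_mul_of_nonneg_left ?_ hC₁)
    exact le_mul_of_one_le_right (abs_nonneg _) (one_le_pow₀ (by exact_mod_cast hM1))
  · have h0 := abs_coeff_comp_X_add_natCast_le hP hi 0
    rw [coeff_zero_eq_eval_zero, eval_comp] at h0
    simp only [eval_add, eval_X, eval_C, zero_add] at h0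
    rw [mul_right_comm]
    exact mul_le_mul_of_nonneg_right h0 (by positivity)

lemma exists_Qpoly_mem_leadApproxPolys (hC₁ : 0 < C₁) {ξ : ℝ} {i : ℕ} (hi : i ≤ k)
    (hξ : ξ ≠ (i : ℤ)) {ω ω' : ℝ} (hω : ω < ω') :
    ∃ H₀, ∀ P ∈ approxPolys k ξ ω', (∀ j ≤ k, |P.eval (j : ℤ)| ≤ |P.eval (i : ℤ)|) →
      H₀ < intPolyNorm (Qpoly k M i P) →
      Qpoly k M i P ∈ leadApproxPolys k (1 / (M * (ξ - (i : ℤ)))) ω := by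
  have hξi : ξ - ((i : ℤ) : ℝ) ≠ 0 := sub_ne_zero.2 hξ
  obtain ⟨H₀, hH₀⟩ := exists_mul_rpow_neg_le_rpow_neg (A := (k + 1) ^ (k + 1) * (M : ℝ) ^ k)
    (by positivity) hC₁ (by positivity : 0 < 1 / |ξ - ((i : ℤ) : ℝ)| ^ k) hω
  refine ⟨H₀, fun P ⟨hP0, hP, hPξ⟩ hmax hQ => ?_⟩
  obtain ⟨hPQ, hQP⟩ := intPolyNorm_Qpoly_bounds_of_isMax hinterp hM1 hM hC₁.le hP hi hmax
  refine ⟨fun hQ0 => ?_, natDegree_Qpoly_le k M i P, ?_, ?_⟩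
  · have := (one_le_intPolyNorm hP0).trans hPQ
    rw [hQ0, intPolyNorm_zero, mul_zero] at this
    linarith
  · rw [Nat.cast_natAbs, Int.cast_abs,
      intPolyNorm_eq_abs_coeff (abs_coeff_Qpoly_le_of_isMax hinterp hM1 hM hP hi hmax)]
  · rw [aeval_Qpoly_one_div hP (by exact_mod_cast (by omega : M ≠ 0)) hξi, abs_div, abs_pow,
      div_eq_mul_one_div, mul_comm]
    calc 1 / |ξ - ((i : ℤ) : ℝ)| ^ k * |aeval ξ P|
        ≤ 1 / |ξ - ((i : ℤ) : ℝ)| ^ k * intPolyNorm P ^ (-ω') := by gcongr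
      _ ≤ intPolyNorm (Qpoly k M i P) ^ (-ω) :=
          hH₀ _ _ (zero_lt_one.trans_le (one_le_intPolyNorm hP0)) hQP hPQ hQ

lemma exists_infinite_leadApproxPolys (hC₁ : 0 < C₁) {ξ : ℝ}
    (hξ : ∀ i : Fin (k + 1), ξ ≠ ((i : ℕ) : ℤ))
    {ω ω' : ℝ} (hω : ω < ω') (hS : (approxPolys k ξ ω').Infinite) :
    ∃ i : Fin (k + 1), (leadApproxPolys k (1 / (M * (ξ - ((i : ℕ) : ℤ)))) ω).Infinite := by
  set T := fun i : ℕ => {P ∈ approxPolys k ξ ω' | ∀ j ≤ k, |P.eval (j : ℤ)| ≤ |P.eval (i : ℤ)|}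
  have hcover : approxPolys k ξ ω' ⊆ ⋃ i : Fin (k + 1), T i := by
    intro P hP
    obtain ⟨i, hi, hmax⟩ := Finset.exists_max_image (Finset.range (k + 1))
      (fun j : ℕ => |P.eval (j : ℤ)|) Finset.nonempty_range_add_one
    exact Set.mem_iUnion.2 ⟨⟨i, Finset.mem_range.1 hi⟩, hP,
      fun j hj => hmax j (Finset.mem_range_succ_iff.2 hj)⟩
  obtain ⟨i, hi⟩ : ∃ i : Fin (k + 1), (T i).Infinite := by
    by_contra! h
    exact hS ((Set.finite_iUnion h).subset hcover)
  obtain ⟨H₀, hH₀⟩ :=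
    exists_Qpoly_mem_leadApproxPolys hinterp hM1 hM hC₁ (Nat.lt_succ_iff.1 i.isLt) (hξ i) hω
  have hinj : Set.InjOn (Qpoly k M i) (T i) :=
    (Qpoly_injOn k (by omega) _).mono fun P hP => hP.1.2.1
  refine ⟨i, ((hi.image hinj).sdiff (finite_setOf_natDegree_le_intPolyNorm_le k H₀)).mono ?_⟩
  rintro _ ⟨⟨P, ⟨hP, hmax⟩, rfl⟩, hsmall⟩
  exact hH₀ P hP hmax (lt_of_not_ge fun h => hsmall ⟨natDegree_Qpoly_le k M i P, h⟩)

lemma exists_coe_le_omegaLeadExp (hC₁ : 0 < C₁) {ξ : ℝ}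
    (hξ : ∀ i : Fin (k + 1), ξ ≠ ((i : ℕ) : ℤ)) {w : ℝ} (hw : (w : EReal) ≤ omegaExp k ξ) :
    ∃ i : Fin (k + 1), (w : EReal) ≤ omegaLeadExp k (1 / (M * (ξ - ((i : ℕ) : ℤ)))) := by
  rw [coe_le_omegaExp_iff] at hw
  simp only [coe_le_omegaLeadExp_iff]
  refine exists_forall_lt_of_forall_lt_exists
    (fun i _ _ h hinf => hinf.mono (leadApproxPolys_antitone _ _ h)) fun ω hω => ?_
  obtain ⟨ω', hωω', hω'w⟩ := exists_between hω
  exact exists_infinite_leadApproxPolys hinterp hM1 hM hC₁ hξ hωω' (hw ω' hω'w)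

end Transfer

/-- There exist distinct integers `r_0, …, r_k` and an integer `M ≥ 1` such that
`S = {ξ : ω_k(ξ) ≥ w}` satisfies `S ⊆ ⋃_i τ_i⁻¹(S^lead)` with `τ_i(ξ) = 1/(M(ξ − r_i))`,
and moreover `S^lead ⊆ S`. -/
theorem coveringByPreimages (k : ℕ) (hk : 1 ≤ k) (w : ℝ) :
    ∃ (r : Fin (k + 1) → ℤ) (M : ℤ), Function.Injective r ∧ 1 ≤ M ∧
      ({ξ : ℝ | (w : EReal) ≤ omegaExp k ξ} ⊆
        ⋃ i : Fin (k + 1),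
          {ξ : ℝ | ξ ≠ (r i : ℝ) ∧
            (w : EReal) ≤ omegaLeadExp k (1 / (M * (ξ - r i)))}) ∧
      ({ξ : ℝ | (w : EReal) ≤ omegaLeadExp k ξ} ⊆
        {ξ : ℝ | (w : EReal) ≤ omegaExp k ξ}) := by
  obtain ⟨C₁, hC₁, hinterp⟩ := exists_intPolyNorm_le_mul_of_abs_eval_le k
  obtain ⟨n, hn⟩ := exists_nat_ge (((k : ℝ) + 1) ^ (k + 1) * C₁)
  have hM : ((k : ℝ) + 1) ^ (k + 1) * C₁ ≤ ((n + 1 : ℤ) : ℝ) := by push_cast; linarith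
  refine ⟨fun i => (i : ℕ), n + 1, fun a b h => Fin.ext (Nat.cast_injective h), by omega,
    fun ξ hξ => ?_, fun ξ hξ => ?_⟩
  · by_cases hnode : ∃ j : Fin (k + 1), ξ = ((j : ℕ) : ℤ)
    · obtain ⟨j, rfl⟩ := hnode
      have : Nontrivial (Fin (k + 1)) := Fin.nontrivial_iff_two_le.2 (by omega)
      obtain ⟨i, hij⟩ := exists_ne j
      have hji : ((j : ℕ) : ℤ) ≠ ((i : ℕ) : ℤ) := by exact_mod_cast Fin.val_ne_of_ne hij.symm
      have hd : (n + 1) * (((j : ℕ) : ℤ) - ((i : ℕ) : ℤ)) ≠ 0 :=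
        mul_ne_zero (by omega) (sub_ne_zero.2 hji)
      refine Set.mem_iUnion.2 ⟨i, Int.cast_injective.ne hji, ?_⟩
      have hτ := coe_le_omegaLeadExp_one_div_intCast hk hd w
      push_cast at hτ ⊢
      exact hτ
    · simp only [not_exists] at hnode
      obtain ⟨i, hi⟩ := exists_coe_le_omegaLeadExp hinterp (by omega) hM hC₁ hnode hξ
      exact Set.mem_iUnion.2 ⟨i, hnode i, hi⟩
  · replace hξ := (coe_le_omegaLeadExp_iff k ξ w).1 hξ
    exact (coe_le_omegaExp_iff _ _ _).2 fun ω hω => (hξ ω hω).mono (leadApproxPolys_subset _ _ _)
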